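/- arXiv:2210.09740 — 2 statements merged into one kernel-verified Lean document; each statement's English description precedes it below -/
import Mathlib

section
/- For all x, y ≥ 0, all ε > 0 and all κ > 0, the elastic heat kernel correction term g_ε^{E,κ}(x,y) := κ·exp(κ(x+y) + κ²ε/2)·(1 - Erf((x+y+κε)/√(2ε))) satisfies g_ε^{E,κ}(x,y) ≤ κ·exp(−(x+y)²/(2ε)). -/
open MeasureTheory Real Set

/-- The error function. -/
noncomputable def erf (x : ℝ) : ℝ := (2 / Real.sqrt π) * ∫ z in (0:ℝ)..x, Real.exp (-z^2)

/-- The elastic heat kernel correction term `g_ε^{E,κ}(x,y)`. -/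
noncomputable def gElastic (ε κ x y : ℝ) : ℝ :=
  κ * Real.exp (κ * (x + y) + κ^2 * ε / 2) *
    (1 - erf ((x + y + κ * ε) / Real.sqrt (2 * ε)))

lemma gauss_int : Integrable (fun z : ℝ => Real.exp (-z^2)) := by
  have := integrable_exp_neg_mul_sq (by norm_num : (0:ℝ) < 1)
  simpa using this

lemma shift_int (t : ℝ) :
    ∫ z in Ioi t, Real.exp (-(z - t)^2) = ∫ z in Ioi (0:ℝ), Real.exp (-z^2) := by
  have h : ∀ z : ℝ, (Ioi t).indicator (fun z => Real.exp (-(z - t)^2)) z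
      = (Ioi (0:ℝ)).indicator (fun u => Real.exp (-u^2)) (z - t) := by
    intro z
    by_cases hz : z ∈ Ioi t
    · rw [indicator_of_mem hz, indicator_of_mem (by simpa [sub_pos] using hz)]
    · rw [indicator_of_notMem hz, indicator_of_notMem (by simpa [sub_pos] using hz)]
  rw [← integral_indicator measurableSet_Ioi, ← integral_indicator measurableSet_Ioi]
  simp_rw [h]
  exact integral_sub_right_eq_self ((Ioi (0:ℝ)).indicator (fun u => Real.exp (-u^2))) t

lemma one_sub_erf_le (t : ℝ) (ht : 0 ≤ t) : 1 - erf t ≤ Real.exp (-t^2) := by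
  have hIoi : ∫ z in Ioi (0:ℝ), Real.exp (-z^2) = Real.sqrt π / 2 := by
    have := integral_gaussian_Ioi 1
    simpa using this
  have hsplit : (∫ z in Ioi (0:ℝ), Real.exp (-z^2))
      = (∫ z in (0:ℝ)..t, Real.exp (-z^2)) + ∫ z in Ioi t, Real.exp (-z^2) := by
    rw [intervalIntegral.integral_of_le ht, ← setIntegral_union (by simp [Set.disjoint_left])
      measurableSet_Ioi (gauss_int.integrableOn) (gauss_int.integrableOn),
      Ioc_union_Ioi_eq_Ioi ht]
  have hbound : ∫ z in Ioi t, Real.exp (-z^2) ≤ Real.exp (-t^2) * (Real.sqrt π / 2) := by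
    have h1 : ∫ z in Ioi t, Real.exp (-z^2)
        ≤ ∫ z in Ioi t, Real.exp (-t^2) * Real.exp (-(z - t)^2) := by
      apply setIntegral_mono_on gauss_int.integrableOn
      · exact (Integrable.const_mul (by
          have := (gauss_int.comp_sub_right t); exact this) _).integrableOn
      · exact measurableSet_Ioi
      · intro z hz
        rw [← Real.exp_add]
        apply Real.exp_le_exp.2
        nlinarith [mul_nonneg ht (le_of_lt (sub_pos.2 hz)), sq_nonneg (z - t)]
    rw [integral_const_mul, shift_int, hIoi] at h1
    exact h1
  have hπ : 0 < Real.sqrt π := Real.sqrt_pos.2 Real.pi_pos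
  have : 1 - erf t = (2 / Real.sqrt π) * ∫ z in Ioi t, Real.exp (-z^2) := by
    have h2 : (2 / Real.sqrt π) * ∫ z in Ioi (0:ℝ), Real.exp (-z^2) = 1 := by
      rw [hIoi]; field_simp
    rw [erf, ← h2, hsplit]; ring
  rw [this]
  calc (2 / Real.sqrt π) * ∫ z in Ioi t, Real.exp (-z^2)
      ≤ (2 / Real.sqrt π) * (Real.exp (-t^2) * (Real.sqrt π / 2)) := by
        exact mul_le_mul_of_nonneg_left hbound (by positivity)
    _ = Real.exp (-t^2) := by field_simp

/-- For all `x, y ≥ 0`, `ε > 0` and `κ > 0`, the elastic heat kernel correction term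
satisfies `g_ε^{E,κ}(x,y) ≤ κ·exp(−(x+y)²/(2ε))`. -/
theorem elastic_correction_bound (ε κ x y : ℝ) (hx : 0 ≤ x) (hy : 0 ≤ y)
    (hε : 0 < ε) (hκ : 0 < κ) :
    gElastic ε κ x y ≤ κ * Real.exp (-(x + y)^2 / (2 * ε)) := by
  set t := (x + y + κ * ε) / Real.sqrt (2 * ε) with htdef
  have hs : 0 < Real.sqrt (2 * ε) := Real.sqrt_pos.2 (by linarith)
  have ht : 0 ≤ t := div_nonneg (by nlinarith) hs.le
  have ht2 : t ^ 2 = (x + y + κ * ε)^2 / (2 * ε) := by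
    rw [htdef, div_pow, Real.sq_sqrt (by linarith : (0:ℝ) ≤ 2 * ε)]
  have key := one_sub_erf_le t ht
  have hpos : 0 ≤ κ * Real.exp (κ * (x + y) + κ^2 * ε / 2) := by positivity
  calc gElastic ε κ x y
      ≤ κ * Real.exp (κ * (x + y) + κ^2 * ε / 2) * Real.exp (-t^2) :=
        mul_le_mul_of_nonneg_left key hpos
    _ = κ * Real.exp (-(x + y)^2 / (2 * ε)) := by
        rw [mul_assoc, ← Real.exp_add]
        congr 1
        rw [ht2]
        field_simp
        ring
end

section
/- For all x, y ≥ 0, κ > 0 and ε > 0, the x-derivative of the elastic correction term satisfies |∂_x g_ε^{E,κ}(x,y)| ≤ κ²·exp(−(x+y)²/(2ε)) + (2κ/√(2πε))·exp(−(x+y)²/(2ε)). -/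
/-!
Differentiating `g = κ e^{κ s + κ²ε/2} (1 - erf u)`, `s = x + y`, `u = (s + κε)/√(2ε)`, gives
`κ² e^{κ s + κ²ε/2} (1 - erf u) - κ e^{κ s + κ²ε/2} · 2 e^{-u²} / (√π √(2ε))`.
Completing the square, `e^{κ s + κ²ε/2} e^{-u²} = e^{-s²/(2ε)}`, so the second term is exactly
`2κ/√(2πε) · e^{-s²/(2ε)}`, and the Gaussian tail bound `1 - erf u ≤ e^{-u²}` for `u ≥ 0`
bounds the first by `κ² e^{-s²/(2ε)}`. Both terms are nonnegative, so the triangle inequality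
finishes.
-/

open Real

open MeasureTheory Set

theorem hasDerivAt_erf (t : ℝ) : HasDerivAt erf (2 / √π * exp (-t ^ 2)) t :=
  ((continuous_exp.comp (by fun_prop)).integral_hasStrictDerivAt 0 t).hasDerivAt.const_mul _

theorem integrable_exp_neg_sq : Integrable fun z : ℝ => exp (-z ^ 2) := by
  simpa using integrable_exp_neg_mul_sq one_pos

theorem integral_Ioi_exp_neg_sq : ∫ z in Ioi (0 : ℝ), exp (-z ^ 2) = √π / 2 := by
  simpa using integral_gaussian_Ioi 1

theorem integral_Ioi_exp_neg_sq_sub (u : ℝ) :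
    ∫ z in Ioi u, exp (-(z - u) ^ 2) = √π / 2 := by
  have hshift := (measurePreserving_sub_right volume u).setIntegral_preimage_emb
    (measurableEmbedding_subRight u) (fun z => exp (-z ^ 2)) (Ioi 0)
  simpa using hshift.trans integral_Ioi_exp_neg_sq

theorem one_sub_erf_eq_integral_Ioi (u : ℝ) :
    1 - erf u = 2 / √π * ∫ z in Ioi u, exp (-z ^ 2) := by
  have hsplit := intervalIntegral.integral_interval_add_Ioi (a := 0) (b := u)
    integrable_exp_neg_sq.integrableOn integrable_exp_neg_sq.integrableOn
  have hhalf : 2 / √π * (√π / 2) = 1 := by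
    field_simp
  rw [← hhalf, ← integral_Ioi_exp_neg_sq, ← hsplit, erf]
  ring

theorem one_sub_erf_nonneg (u : ℝ) : 0 ≤ 1 - erf u := by
  rw [one_sub_erf_eq_integral_Ioi]
  exact mul_nonneg (by positivity)
    (setIntegral_nonneg measurableSet_Ioi fun _ _ => (exp_pos _).le)

/-- On `z ≥ u ≥ 0` one has `z² ≥ u² + (z - u)²`, and the shifted half-Gaussian has mass `√π / 2`. -/
theorem one_sub_erf_le_exp_neg_sq {u : ℝ} (hu : 0 ≤ u) : 1 - erf u ≤ exp (-u ^ 2) := by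
  have htail : ∫ z in Ioi u, exp (-z ^ 2) ≤ ∫ z in Ioi u, exp (-u ^ 2) * exp (-(z - u) ^ 2) := by
    refine setIntegral_mono_on integrable_exp_neg_sq.integrableOn
      ((integrable_exp_neg_sq.comp_sub_right u).const_mul _).integrableOn measurableSet_Ioi ?_
    intro z hz
    rw [← exp_add, exp_le_exp]
    nlinarith [mul_nonneg hu (sub_nonneg.mpr (mem_Ioi.mp hz).le)]
  rw [integral_const_mul, integral_Ioi_exp_neg_sq_sub] at htail
  calc 1 - erf u = 2 / √π * ∫ z in Ioi u, exp (-z ^ 2) := one_sub_erf_eq_integral_Ioi u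
    _ ≤ 2 / √π * (exp (-u ^ 2) * (√π / 2)) := by gcongr
    _ = exp (-u ^ 2) := by field_simp

theorem hasDerivAt_gElastic (ε κ x y : ℝ) :
    HasDerivAt (fun x' => gElastic ε κ x' y)
      (κ ^ 2 * exp (κ * (x + y) + κ ^ 2 * ε / 2) * (1 - erf ((x + y + κ * ε) / √(2 * ε)))
        - κ * exp (κ * (x + y) + κ ^ 2 * ε / 2)
          * (2 / √π * exp (-((x + y + κ * ε) / √(2 * ε)) ^ 2) / √(2 * ε))) x := by
  have hexp : HasDerivAt (fun x' => exp (κ * (x' + y) + κ ^ 2 * ε / 2))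
      (exp (κ * (x + y) + κ ^ 2 * ε / 2) * κ) x := by
    simpa using ((((hasDerivAt_id x).add_const y).const_mul κ).add_const _).exp
  have harg : HasDerivAt (fun x' => (x' + y + κ * ε) / √(2 * ε)) (1 / √(2 * ε)) x :=
    (((hasDerivAt_id x).add_const y).add_const _).div_const _
  have herfc := ((hasDerivAt_erf _).comp x harg).const_sub 1
  refine ((hexp.const_mul κ).mul herfc).congr_deriv ?_
  simp only [Function.comp_apply]
  ring

theorem exp_add_mul_exp_neg_sq_eq {ε : ℝ} (hε : 0 < ε) (κ s : ℝ) :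
    exp (κ * s + κ ^ 2 * ε / 2) * exp (-((s + κ * ε) / √(2 * ε)) ^ 2)
      = exp (-s ^ 2 / (2 * ε)) := by
  rw [← exp_add, div_pow, sq_sqrt (by positivity)]
  congr 1
  field_simp
  ring

/-- For all `x, y ≥ 0`, `κ > 0` and `ε > 0`, the `x`-derivative of the elastic
correction term satisfies
`|∂_x g_ε^{E,κ}(x,y)| ≤ κ²·exp(−(x+y)²/(2ε)) + (2κ/√(2πε))·exp(−(x+y)²/(2ε))`. -/
theorem elastic_correction_deriv_bound (ε κ x y : ℝ) (hx : 0 ≤ x) (hy : 0 ≤ y)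
    (hε : 0 < ε) (hκ : 0 < κ) :
    |deriv (fun x' => gElastic ε κ x' y) x|
      ≤ κ^2 * Real.exp (-(x + y)^2 / (2 * ε))
        + (2 * κ / Real.sqrt (2 * π * ε)) * Real.exp (-(x + y)^2 / (2 * ε)) := by
  rw [(hasDerivAt_gElastic ε κ x y).deriv]
  set u := (x + y + κ * ε) / √(2 * ε)
  set E := exp (κ * (x + y) + κ ^ 2 * ε / 2)
  have hEG : E * exp (-u ^ 2) = exp (-(x + y) ^ 2 / (2 * ε)) :=
    exp_add_mul_exp_neg_sq_eq hε κ (x + y)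
  have hu : 0 ≤ u := by positivity
  have herfc_term : κ ^ 2 * E * (1 - erf u) ≤ κ ^ 2 * Real.exp (-(x + y) ^ 2 / (2 * ε)) := by
    rw [← hEG, ← mul_assoc]
    exact mul_le_mul_of_nonneg_left (one_sub_erf_le_exp_neg_sq hu) (by positivity)
  have hgauss_term : κ * E * (2 / √π * exp (-u ^ 2) / √(2 * ε))
      = 2 * κ / √(2 * π * ε) * Real.exp (-(x + y) ^ 2 / (2 * ε)) := by
    rw [← hEG, show 2 * π * ε = π * (2 * ε) by ring, sqrt_mul pi_pos.le]
    field_simp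
  calc _ ≤ |κ ^ 2 * E * (1 - erf u)| + |κ * E * (2 / √π * exp (-u ^ 2) / √(2 * ε))| :=
        abs_sub _ _
    _ = κ ^ 2 * E * (1 - erf u) + κ * E * (2 / √π * exp (-u ^ 2) / √(2 * ε)) := by
        rw [abs_of_nonneg (mul_nonneg (by positivity) (one_sub_erf_nonneg u)),
          abs_of_nonneg (by positivity)]
    _ ≤ _ := by rw [hgauss_term]; gcongr
end
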